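/- Fix rho ∈ (0,1) small enough and constants as follows. Suppose x ∈ O and |O ∩ B(x,L)| / |B(x,L)| < delta for some integer L, where O ⊆ Z^d is a set of obstacles. For each radius l let X_l(x) be a skeletal set for O ∩ B(x,l) (pairwise distances ≥ l^{1/2d}, covering radius l^{1/2d}, containing x) and let X°_l(x) = X_l(x) ∩ B(x, l/2). Then there exists rho > 0 independent of L and delta such that for some l with L^{5/6} ≤ l ≤ L one has both |O ∩ B(x,l)|/|B(x,l)| < delta and |X°_l(x)| ≥ rho · min(|X_l(x)|, delta · l^{d-1/2}). -/

import Mathlib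

/-- Embedding of lattice points into Euclidean space. -/
noncomputable def toR {d : ℕ} (x : Fin d → ℤ) : EuclideanSpace ℝ (Fin d) :=
  WithLp.toLp 2 (fun i => (x i : ℝ))

/-- The lattice ball of Euclidean radius `r` around `x`. -/
def latBall {d : ℕ} (x : Fin d → ℤ) (r : ℝ) : Set (Fin d → ℤ) :=
  {y | dist (toR x) (toR y) ≤ r}

/-!
Follow the radii `l_j = L / 4 ^ j` for `j ≤ J = log₄₀₉₆ L`; all of them lie in `[L^{5/6}, L]`.
The points of `X_{l/4}` are `(l/4)^{1/2d}`-separated and each lies within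
`l^{1/2d} ≤ 2 (l/4)^{1/2d}` of a point of `X°_l`, so a packing argument gives
`|X_{l/4}| ≤ (18 d)^d |X°_l|`. If instead the obstacle density in `B(x, l/4)` is at least `δ`,
covering `O ∩ B(x, l/4)` by the balls of radius `(l/4)^{1/2d}` around `X_{l/4}` gives
`δ l^{d-1/2} ≤ (12 d)^d |X_{l/4}|`. Hence, if `|X°_l|` were small at every radius of the chain
where the density is below `δ`, the density would stay below `δ` along the whole chain while
`|X_{l_j}|` decays geometrically, and after `J ≈ log L` steps this contradicts `x ∈ X°_{l_J}`.
-/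

open Metric

section Counting

variable {α ι : Type*}

theorem Set.ncard_le_mul_ncard_of_subset_biUnion {T : Set α} {Z : Set ι} {U : ι → Set α} {k : ℕ}
    (hZ : Z.Finite) (hT : T ⊆ ⋃ z ∈ Z, U z) (hk : ∀ z ∈ Z, (T ∩ U z).ncard ≤ k) :
    T.ncard ≤ k * Z.ncard := by
  have hTU : T = ⋃ z ∈ hZ.toFinset, T ∩ U z := by
    simpa only [Set.Finite.mem_toFinset, ← Set.inter_iUnion₂] using (Set.inter_eq_left.2 hT).symm
  calc T.ncard = (⋃ z ∈ hZ.toFinset, T ∩ U z).ncard := congrArg _ hTU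
    _ ≤ ∑ z ∈ hZ.toFinset, (T ∩ U z).ncard := Finset.set_ncard_biUnion_le _ _
    _ ≤ hZ.toFinset.card • k := Finset.sum_le_card_nsmul _ _ _ (by simpa using hk)
    _ = k * Z.ncard := by rw [Set.ncard_eq_toFinset_card Z hZ, smul_eq_mul, mul_comm]

theorem Set.ncard_mul_le_ncard_of_pairwiseDisjoint {S : Set ι} {B : ι → Set α} {U : Set α}
    {k : ℕ} (hU : U.Finite) (hB : S.PairwiseDisjoint B) (hBU : ∀ a ∈ S, B a ⊆ U)
    (hk : ∀ a ∈ S, k ≤ (B a).ncard) : S.ncard * k ≤ U.ncard := by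
  obtain hS | hS := S.finite_or_infinite
  · have hBfin : ∀ a ∈ S, (B a).Finite := fun a ha => hU.subset (hBU a ha)
    calc S.ncard * k = hS.toFinset.card • k := by rw [Set.ncard_eq_toFinset_card S hS, smul_eq_mul]
      _ ≤ ∑ a ∈ hS.toFinset, (B a).ncard := Finset.card_nsmul_le_sum _ _ _ (by simpa using hk)
      _ = (⋃ a ∈ S, B a).ncard := by
        rw [hS.ncard_biUnion hBfin hB, finsum_mem_eq_finite_toFinset_sum _ hS]
      _ ≤ U.ncard := Set.ncard_le_ncard (Set.iUnion₂_subset hBU) hU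
  · simp [hS.ncard]

end Counting

theorem exists_le_of_geometric_descent {P Q : ℕ → Prop} {a : ℕ → ℝ} {θ : ℝ} {J : ℕ}
    (hθ : 0 ≤ θ) (h0 : P 0)
    (hstep : ∀ j < J, P j → ¬Q j → P (j + 1) ∧ a (j + 1) ≤ θ * a j)
    (hlast : a J ≤ θ ^ J * a 0 → Q J) : ∃ j ≤ J, P j ∧ Q j := by
  by_contra! hbad
  have hchain : ∀ j ≤ J, P j ∧ a j ≤ θ ^ j * a 0 := by
    intro j hj
    induction j with
    | zero => simpa using h0
    | succ j ih =>
      obtain ⟨hP, ha⟩ := ih (by omega)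
      obtain ⟨hP', ha'⟩ := hstep j (by omega) hP (hbad j (by omega) hP)
      refine ⟨hP', ha'.trans ?_⟩
      rw [pow_succ', mul_assoc]
      gcongr
  obtain ⟨hP, ha⟩ := hchain J le_rfl
  exact hbad J le_rfl hP (hlast ha)

section Lattice

variable {d : ℕ}

-- `dist` on `Fin d → ℤ` is the sup distance, so its closed balls are cubes.
theorem dist_le_dist_toR (a b : Fin d → ℤ) : dist a b ≤ dist (toR a) (toR b) := by
  refine (dist_pi_le_iff dist_nonneg).2 fun i => ?_
  rw [← Int.dist_cast_real]
  exact PiLp.dist_apply_le (toR a) (toR b) i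

theorem dist_toR_le (a b : Fin d → ℤ) : dist (toR a) (toR b) ≤ d * dist a b := by
  calc dist (toR a) (toR b) = √(∑ i, dist (a i : ℝ) (b i) ^ 2) := EuclideanSpace.dist_eq _ _
    _ ≤ √(∑ _i : Fin d, dist a b ^ 2) := by
      gcongr with i
      rw [Int.dist_cast_real]
      exact dist_le_pi_dist a b i
    _ = √d * dist a b := by simp [Real.sqrt_sq dist_nonneg]
    _ ≤ d * dist a b := by
      gcongr
      exact Real.sqrt_le_iff.2 ⟨by positivity, by exact_mod_cast Nat.le_self_pow two_ne_zero d⟩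

theorem latBall_subset_closedBall (x : Fin d → ℤ) (r : ℝ) : latBall x r ⊆ closedBall x r :=
  fun y hy => (dist_comm y x).trans_le ((dist_le_dist_toR x y).trans hy)

theorem closedBall_subset_latBall (x : Fin d → ℤ) (r : ℝ) :
    closedBall x r ⊆ latBall x (d * r) := fun y hy =>
  (dist_toR_le x y).trans (by rw [dist_comm]; gcongr; exact hy)

theorem closedBall_eq_Icc (z : Fin d → ℤ) {r : ℝ} (hr : 0 ≤ r) :
    closedBall z r = Set.Icc (z - ⌊r⌋) (z + ⌊r⌋) := by
  rw [closedBall_pi z hr, ← Set.pi_univ_Icc]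
  congr! with i
  rw [Int.closedBall_eq_Icc, sub_eq_add_neg, Int.ceil_intCast_add, Int.ceil_neg,
    Int.floor_intCast_add]
  rfl

theorem ncard_closedBall (z : Fin d → ℤ) {r : ℝ} (hr : 0 ≤ r) :
    (closedBall z r).ncard = (2 * ⌊r⌋₊ + 1) ^ d := by
  classical
  rw [closedBall_eq_Icc z hr, ← Finset.coe_Icc, Set.ncard_coe_finset, Pi.card_Icc]
  have hfl : ((⌊r⌋₊ : ℕ) : ℤ) = ⌊r⌋ := Int.natCast_floor_eq_floor hr
  rw [Finset.prod_eq_pow_card (b := 2 * ⌊r⌋₊ + 1) fun i _ => by simp [Int.card_Icc]; omega]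
  simp

theorem pow_le_ncard_closedBall (z : Fin d → ℤ) {r : ℝ} (hr : 0 ≤ r) :
    r ^ d ≤ (closedBall z r).ncard := by
  rw [ncard_closedBall z hr]
  push_cast
  gcongr
  linarith [Nat.lt_floor_add_one r, Nat.floor_le hr]

theorem ncard_closedBall_le (z : Fin d → ℤ) {r : ℝ} (hr : 0 ≤ r) :
    ((closedBall z r).ncard : ℝ) ≤ (2 * r + 1) ^ d := by
  rw [ncard_closedBall z hr]
  push_cast
  gcongr
  exact Nat.floor_le hr

theorem finite_latBall (x : Fin d → ℤ) (r : ℝ) : (latBall x r).Finite :=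
  (isCompact_closedBall x r).finite_of_discrete.subset (latBall_subset_closedBall x r)

theorem ncard_latBall_le (x : Fin d → ℤ) {r : ℝ} (hr : 0 ≤ r) :
    ((latBall x r).ncard : ℝ) ≤ (2 * r + 1) ^ d := by
  have hsub := Set.ncard_le_ncard (latBall_subset_closedBall x r)
    (isCompact_closedBall x r).finite_of_discrete
  exact le_trans (by exact_mod_cast hsub) (ncard_closedBall_le x hr)

theorem div_pow_le_ncard_latBall (hd : d ≠ 0) (x : Fin d → ℤ) {r : ℝ} (hr : 0 ≤ r) :
    (r / d) ^ d ≤ (latBall x r).ncard := by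
  have hsub : closedBall x (r / d) ⊆ latBall x r := by
    simpa [mul_div_cancel₀ r (Nat.cast_ne_zero.2 hd)] using closedBall_subset_latBall x (r / d)
  have hcard := Set.ncard_le_ncard hsub (finite_latBall x r)
  exact (pow_le_ncard_closedBall x (by positivity)).trans (by exact_mod_cast hcard)

theorem ncard_le_of_separated (hd : d ≠ 0) {S : Set (Fin d → ℤ)} {z : Fin d → ℤ} {s t : ℝ}
    (hs : 1 ≤ s) (ht : 0 ≤ t) (hts : t ≤ 2 * s) (hS : S ⊆ latBall z t)
    (hsep : ∀ a ∈ S, ∀ b ∈ S, a ≠ b → s ≤ dist (toR a) (toR b)) :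
    S.ncard ≤ (18 * d) ^ d := by
  have hd1 : (1 : ℝ) ≤ d := by exact_mod_cast Nat.one_le_iff_ne_zero.2 hd
  set ε := s / (3 * d) with hε_def
  have hε : 0 < ε := by positivity
  have hεs : ε ≤ s / 3 := div_le_div_of_nonneg_left (by positivity) (by norm_num) (by linarith)
  have hdisj : S.PairwiseDisjoint fun a => closedBall a ε := by
    intro a ha b hb hab
    refine closedBall_disjoint_closedBall ?_
    have hsd : s ≤ d * dist a b := (hsep a ha b hb hab).trans (dist_toR_le a b)
    calc ε + ε < s / d := by rw [hε_def]; field_simp; linarith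
      _ ≤ dist a b := by rw [div_le_iff₀ (by positivity)]; linarith
  have hsub : ∀ a ∈ S, closedBall a ε ⊆ closedBall z (t + ε) := fun a ha y hy => by
    have haz : dist a z ≤ t := (dist_comm a z).trans_le ((dist_le_dist_toR z a).trans (hS ha))
    exact (dist_triangle y a z).trans (by linarith [mem_closedBall.1 hy])
  have hcount := Set.ncard_mul_le_ncard_of_pairwiseDisjoint
    (isCompact_closedBall z (t + ε)).finite_of_discrete hdisj hsub
    fun a _ => (ncard_closedBall a hε.le).ge
  have hvol : (S.ncard : ℝ) * ε ^ d ≤ (18 * d) ^ d * ε ^ d :=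
    calc (S.ncard : ℝ) * ε ^ d ≤ S.ncard * (closedBall z ε).ncard := by
          gcongr; exact pow_le_ncard_closedBall z hε.le
      _ ≤ (closedBall z (t + ε)).ncard := by
          rw [ncard_closedBall z hε.le]; exact_mod_cast hcount
      _ ≤ (2 * (t + ε) + 1) ^ d := ncard_closedBall_le z (by positivity)
      _ ≤ (6 * s) ^ d := by gcongr; linarith
      _ = (18 * d) ^ d * ε ^ d := by rw [← mul_pow, hε_def]; field_simp; ring
  exact_mod_cast le_of_mul_le_mul_right hvol (by positivity)

theorem ncard_le_mul_of_forall_exists_dist_le {T Z : Set (Fin d → ℤ)} {s : ℝ} (hs : 0 ≤ s)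
    (hZ : Z.Finite) (hcov : ∀ y ∈ T, ∃ z ∈ Z, dist (toR y) (toR z) ≤ s) :
    (T.ncard : ℝ) ≤ Z.ncard * (2 * s + 1) ^ d := by
  have hT : T ⊆ ⋃ z ∈ Z, closedBall z s := fun y hy => by
    obtain ⟨z, hz, hyz⟩ := hcov y hy
    exact Set.mem_iUnion₂.2 ⟨z, hz, (dist_le_dist_toR y z).trans hyz⟩
  have hcount := Set.ncard_le_mul_ncard_of_subset_biUnion hZ hT fun z _ =>
    (Set.ncard_inter_le_ncard_right T _ (isCompact_closedBall z s).finite_of_discrete).trans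
      (ncard_closedBall z hs).le
  calc (T.ncard : ℝ) ≤ ((2 * ⌊s⌋₊ + 1) ^ d * Z.ncard : ℕ) := by exact_mod_cast hcount
    _ ≤ Z.ncard * (2 * s + 1) ^ d := by
      push_cast
      rw [mul_comm]
      gcongr
      exact Nat.floor_le hs

end Lattice

section Exponents

variable {d : ℕ} {l : ℝ}

theorem rpow_one_div_two_mul_pow (hd : d ≠ 0) (hl : 0 ≤ l) :
    (l ^ ((1 : ℝ) / (2 * (d : ℝ)))) ^ d = l ^ ((1 : ℝ) / 2) := by
  rw [← Real.rpow_natCast, ← Real.rpow_mul hl]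
  congr 1
  field_simp

theorem rpow_one_div_two_mul_le_two_mul (hd : d ≠ 0) (hl : 0 ≤ l) :
    l ^ ((1 : ℝ) / (2 * (d : ℝ))) ≤ 2 * (l / 4) ^ ((1 : ℝ) / (2 * (d : ℝ))) := by
  have hd1 : (1 : ℝ) ≤ d := by exact_mod_cast Nat.one_le_iff_ne_zero.2 hd
  have h4 : (4 : ℝ) ^ ((1 : ℝ) / (2 * (d : ℝ))) ≤ 2 :=
    calc (4 : ℝ) ^ ((1 : ℝ) / (2 * (d : ℝ))) ≤ 4 ^ ((1 : ℝ) / 2) :=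
          Real.rpow_le_rpow_of_exponent_le (by norm_num) (by gcongr; linarith)
      _ = 2 := by
          rw [show (4 : ℝ) = 2 ^ (2 : ℝ) by norm_num, ← Real.rpow_mul (by norm_num)]
          norm_num
  calc l ^ ((1 : ℝ) / (2 * (d : ℝ)))
        = 4 ^ ((1 : ℝ) / (2 * (d : ℝ))) * (l / 4) ^ ((1 : ℝ) / (2 * (d : ℝ))) := by
        rw [← Real.mul_rpow (by norm_num) (by positivity), mul_div_cancel₀ l (by norm_num)]
    _ ≤ 2 * (l / 4) ^ ((1 : ℝ) / (2 * (d : ℝ))) := by gcongr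

theorem rpow_one_div_two_mul_le_div_four (hd : d ≠ 0) (hl : 16 ≤ l) :
    l ^ ((1 : ℝ) / (2 * (d : ℝ))) ≤ l / 4 := by
  have hd1 : (1 : ℝ) ≤ d := by exact_mod_cast Nat.one_le_iff_ne_zero.2 hd
  have hsqrt : 4 ≤ √l := Real.le_sqrt_of_sq_le (by linarith)
  calc l ^ ((1 : ℝ) / (2 * (d : ℝ))) ≤ l ^ ((1 : ℝ) / 2) :=
        Real.rpow_le_rpow_of_exponent_le (by linarith) (by gcongr; linarith)
    _ = √l := (Real.sqrt_eq_rpow l).symm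
    _ = √l * 4 / 4 := by ring
    _ ≤ √l * √l / 4 := by gcongr
    _ = l / 4 := by rw [Real.mul_self_sqrt (by linarith)]

theorem rpow_sub_half_le_four_pow_mul (hl : 0 ≤ l) :
    l ^ ((d : ℝ) - 1 / 2) ≤ 4 ^ d * (l / 4) ^ ((d : ℝ) - 1 / 2) := by
  have h4 : (4 : ℝ) ^ ((d : ℝ) - 1 / 2) ≤ 4 ^ d := by
    rw [← Real.rpow_natCast]
    exact Real.rpow_le_rpow_of_exponent_le (by norm_num) (by linarith)
  calc l ^ ((d : ℝ) - 1 / 2) = 4 ^ ((d : ℝ) - 1 / 2) * (l / 4) ^ ((d : ℝ) - 1 / 2) := by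
        rw [← Real.mul_rpow (by norm_num) (by positivity), mul_div_cancel₀ l (by norm_num)]
    _ ≤ 4 ^ d * (l / 4) ^ ((d : ℝ) - 1 / 2) := by gcongr

end Exponents

structure IsSkeletalSet {d : ℕ} (O : Set (Fin d → ℤ)) (x : Fin d → ℤ) (l : ℝ)
    (S : Set (Fin d → ℤ)) : Prop where
  finite : S.Finite
  subset : S ⊆ O ∩ latBall x l
  mem : x ∈ S
  separated : ∀ a ∈ S, ∀ b ∈ S, a ≠ b → l ^ ((1 : ℝ) / (2 * (d : ℝ))) ≤ dist (toR a) (toR b)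
  covers : ∀ y ∈ O ∩ latBall x l, ∃ z ∈ S, dist (toR y) (toR z) ≤ l ^ ((1 : ℝ) / (2 * (d : ℝ)))

namespace IsSkeletalSet

variable {d : ℕ} {O S X Y : Set (Fin d → ℤ)} {x : Fin d → ℤ} {l δ : ℝ}

theorem mul_min_le_ncard_inter_latBall (hS : IsSkeletalSet O x l S) (hl : 0 ≤ l) {ρ m : ℝ}
    (hρ : 0 ≤ ρ) (hρS : ρ * S.ncard ≤ 1) :
    ρ * min (S.ncard : ℝ) m ≤ (S ∩ latBall x (l / 2)).ncard := by
  have hx : 1 ≤ (S ∩ latBall x (l / 2)).ncard :=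
    (Set.ncard_pos (hS.finite.subset Set.inter_subset_left)).2
      ⟨x, hS.mem, show dist (toR x) (toR x) ≤ l / 2 by rw [dist_self]; positivity⟩
  calc ρ * min (S.ncard : ℝ) m ≤ ρ * S.ncard := by gcongr; exact min_le_left _ _
    _ ≤ (S ∩ latBall x (l / 2)).ncard := hρS.trans (by exact_mod_cast hx)

theorem ncard_le_pow (hS : IsSkeletalSet O x l S) (hl : 0 ≤ l) :
    (S.ncard : ℝ) ≤ (2 * l + 1) ^ d := by
  have hcard := Set.ncard_le_ncard (fun _ ha => (hS.subset ha).2) (finite_latBall x l)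
  exact le_trans (by exact_mod_cast hcard) (ncard_latBall_le x hl)

theorem mul_rpow_le_mul_ncard (hd : d ≠ 0) (hS : IsSkeletalSet O x l S) (hl : 1 ≤ l) (hδ : 0 ≤ δ)
    (hdens : δ * (latBall x l).ncard ≤ (O ∩ latBall x l).ncard) :
    δ * l ^ ((d : ℝ) - 1 / 2) ≤ (3 * d) ^ d * S.ncard := by
  set s := l ^ ((1 : ℝ) / (2 * (d : ℝ)))
  have hs : 1 ≤ s := Real.one_le_rpow hl (by positivity)
  have hcov := ncard_le_mul_of_forall_exists_dist_le (by linarith) hS.finite hS.covers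
  have hvol : δ * (l / d) ^ d ≤ S.ncard * (3 ^ d * l ^ ((1 : ℝ) / 2)) :=
    calc δ * (l / d) ^ d ≤ δ * (latBall x l).ncard := by
          gcongr; exact div_pow_le_ncard_latBall hd x (by linarith)
      _ ≤ S.ncard * (2 * s + 1) ^ d := hdens.trans hcov
      _ ≤ S.ncard * (3 * s) ^ d := by gcongr; linarith
      _ = S.ncard * (3 ^ d * l ^ ((1 : ℝ) / 2)) := by
          rw [mul_pow, rpow_one_div_two_mul_pow hd (by linarith)]
  have hl2 : 0 < l ^ ((1 : ℝ) / 2) := by positivity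
  calc δ * l ^ ((d : ℝ) - 1 / 2) = δ * (l / d) ^ d * d ^ d / l ^ ((1 : ℝ) / 2) := by
        rw [Real.rpow_sub (by linarith), Real.rpow_natCast, div_pow]
        field_simp
    _ ≤ (3 * d) ^ d * S.ncard := by
        rw [div_le_iff₀ hl2]
        calc δ * (l / d) ^ d * d ^ d ≤ S.ncard * (3 ^ d * l ^ ((1 : ℝ) / 2)) * d ^ d := by gcongr
          _ = (3 * d) ^ d * S.ncard * l ^ ((1 : ℝ) / 2) := by ring

theorem ncard_le_mul_ncard_inter_latBall (hd : d ≠ 0) (hl : 16 ≤ l)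
    (hX : IsSkeletalSet O x l X) (hY : IsSkeletalSet O x (l / 4) Y) :
    Y.ncard ≤ (18 * d) ^ d * (X ∩ latBall x (l / 2)).ncard := by
  set t := l ^ ((1 : ℝ) / (2 * (d : ℝ)))
  have ht : t ≤ l / 4 := rpow_one_div_two_mul_le_div_four hd hl
  have hcover : Y ⊆ ⋃ z ∈ X ∩ latBall x (l / 2), latBall z t := fun y hy => by
    obtain ⟨hyO, hyx : dist (toR x) (toR y) ≤ l / 4⟩ := hY.subset hy
    obtain ⟨z, hz, hyz⟩ := hX.covers y ⟨hyO, show dist (toR x) (toR y) ≤ l by linarith⟩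
    have hxz : dist (toR x) (toR z) ≤ l / 2 := by
      linarith [dist_triangle (toR x) (toR y) (toR z)]
    exact Set.mem_iUnion₂.2 ⟨z, ⟨hz, hxz⟩, (dist_comm _ _).trans_le hyz⟩
  refine Set.ncard_le_mul_ncard_of_subset_biUnion (hX.finite.subset Set.inter_subset_left)
    hcover fun z _ => ncard_le_of_separated hd (Real.one_le_rpow (by linarith) (by positivity))
      (by positivity) (rpow_one_div_two_mul_le_two_mul hd (by linarith)) Set.inter_subset_right
      fun a ha b hb => hY.separated a ha.1 b hb.1

theorem descent_step (hd : d ≠ 0) (hl : 16 ≤ l) (hδ : 0 ≤ δ) (hX : IsSkeletalSet O x l X)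
    (hY : IsSkeletalSet O x (l / 4) Y) {ρ : ℝ} (hρ : 0 ≤ ρ)
    (hρC : (12 * d) ^ d * (18 * d) ^ d * ρ ≤ 1)
    (hdeep : ((X ∩ latBall x (l / 2)).ncard : ℝ) <
      ρ * min (X.ncard : ℝ) (δ * l ^ ((d : ℝ) - 1 / 2))) :
    ((O ∩ latBall x (l / 4)).ncard : ℝ) < δ * (latBall x (l / 4)).ncard ∧
      (Y.ncard : ℝ) ≤ (18 * d) ^ d * ρ * X.ncard := by
  have hcomp : (Y.ncard : ℝ) ≤ (18 * d) ^ d * (X ∩ latBall x (l / 2)).ncard := by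
    exact_mod_cast hX.ncard_le_mul_ncard_inter_latBall hd hl hY
  refine ⟨not_le.1 fun hdens => ?_, ?_⟩
  · have hlow := hY.mul_rpow_le_mul_ncard hd (by linarith) hδ hdens
    have hm : 0 ≤ δ * l ^ ((d : ℝ) - 1 / 2) := by positivity
    have : δ * l ^ ((d : ℝ) - 1 / 2) < δ * l ^ ((d : ℝ) - 1 / 2) :=
      calc δ * l ^ ((d : ℝ) - 1 / 2) ≤ 4 ^ d * (δ * (l / 4) ^ ((d : ℝ) - 1 / 2)) := by
            rw [mul_left_comm]; gcongr; exact rpow_sub_half_le_four_pow_mul (by linarith)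
        _ ≤ 4 ^ d * ((3 * d) ^ d * Y.ncard) := by gcongr
        _ ≤ (12 * d) ^ d * ((18 * d) ^ d * (X ∩ latBall x (l / 2)).ncard) := by
            rw [← mul_assoc, ← mul_pow, ← mul_assoc]; gcongr; linarith
        _ < (12 * d) ^ d * ((18 * d) ^ d * (ρ * (δ * l ^ ((d : ℝ) - 1 / 2)))) := by
            gcongr; exact hdeep.trans_le (by gcongr; exact min_le_right _ _)
        _ ≤ δ * l ^ ((d : ℝ) - 1 / 2) := by
            rw [← mul_assoc, ← mul_assoc]; exact mul_le_of_le_one_left hm hρC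
    exact lt_irrefl _ this
  · calc (Y.ncard : ℝ) ≤ (18 * d) ^ d * (ρ * X.ncard) := by
          refine hcomp.trans ?_
          gcongr
          exact hdeep.le.trans (by gcongr; exact min_le_left _ _)
      _ = (18 * d) ^ d * ρ * X.ncard := by ring

end IsSkeletalSet

theorem rpow_five_sixths_le_div_four_pow {L j : ℕ} (h : 4096 ^ j ≤ L) :
    (L : ℝ) ^ ((5 : ℝ) / 6) ≤ L / 4 ^ j := by
  have hL : (0 : ℝ) < L := by exact_mod_cast (Nat.one_le_pow _ _ (by norm_num)).trans h
  have h4 : (4 : ℝ) ^ j ≤ (L : ℝ) ^ ((6 : ℕ)⁻¹ : ℝ) := by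
    rw [← Real.pow_rpow_inv_natCast (by positivity : (0 : ℝ) ≤ 4 ^ j) (by norm_num : 6 ≠ 0)]
    gcongr
    rw [← pow_mul, mul_comm, pow_mul]
    exact_mod_cast h
  rw [le_div_iff₀ (by positivity)]
  calc (L : ℝ) ^ ((5 : ℝ) / 6) * 4 ^ j ≤ (L : ℝ) ^ ((5 : ℝ) / 6) * (L : ℝ) ^ ((6 : ℕ)⁻¹ : ℝ) := by
        gcongr
    _ = L := by rw [← Real.rpow_add hL]; norm_num

theorem one_le_div_four_pow {L j : ℕ} (h : 4096 ^ j ≤ L) : 1 ≤ (L : ℝ) / 4 ^ j := by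
  rw [one_le_div (by positivity)]
  exact_mod_cast (Nat.pow_le_pow_left (by norm_num) j).trans h

theorem sixteen_le_div_four_pow {L j : ℕ} (h : 4096 ^ (j + 1) ≤ L) : 16 ≤ (L : ℝ) / 4 ^ j := by
  rw [le_div_iff₀ (by positivity)]
  have h16 : 16 * 4 ^ j ≤ 4096 ^ (j + 1) := by
    rw [pow_succ, mul_comm]
    gcongr <;> norm_num
  exact_mod_cast h16.trans h

section Constants

variable {d : ℕ}

/-- With `N = (2 ^ 14 d) ^ d`: `N` dominates the constants `(12 d) ^ d` and `(18 d) ^ d`, and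
`N ^ (J + 1)` dominates `(2 L + 1) ^ d ≥ |B(x, L)|` when `J = log₄₀₉₆ L`. -/
noncomputable def deepRatio (d : ℕ) : ℝ := (((2 ^ 14 * d : ℝ) ^ d) ^ 2)⁻¹

theorem deepRatio_pos (hd : d ≠ 0) : 0 < deepRatio d := by
  unfold deepRatio; positivity

theorem mul_deepRatio_le_one (hd : d ≠ 0) : (12 * d) ^ d * (18 * d) ^ d * deepRatio d ≤ 1 := by
  unfold deepRatio
  rw [mul_inv_le_iff₀ (by positivity), one_mul, ← mul_pow, ← pow_mul, mul_comm d 2, pow_mul]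
  gcongr
  nlinarith

theorem deepRatio_mul_pow_le_one (hd : d ≠ 0) (L : ℕ) :
    deepRatio d * ((18 * d) ^ d * deepRatio d) ^ Nat.log 4096 L * (2 * L + 1) ^ d ≤ 1 := by
  set J := Nat.log 4096 L
  set N : ℝ := (2 ^ 14 * d) ^ d with hN_def
  have hd1 : (1 : ℝ) ≤ d := by exact_mod_cast Nat.one_le_iff_ne_zero.2 hd
  have hN : 1 ≤ N := one_le_pow₀ (by nlinarith)
  have hρ : deepRatio d = (N ^ 2)⁻¹ := rfl
  have hρ0 := deepRatio_pos hd
  have hθ : (18 * d) ^ d * deepRatio d ≤ N⁻¹ := by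
    have h18 : ((18 : ℝ) * d) ^ d ≤ N := by rw [hN_def]; gcongr; norm_num
    calc (18 * d) ^ d * deepRatio d ≤ N * (N ^ 2)⁻¹ := by rw [hρ]; gcongr
      _ = N⁻¹ := by field_simp
  have hL : (2 * L + 1 : ℝ) ^ d ≤ N ^ (J + 1) := by
    have hnat : 2 * L + 1 ≤ (2 ^ 14) ^ (J + 1) := by
      have : L < 4096 ^ (J + 1) := Nat.lt_pow_succ_log_self (by norm_num) L
      have h2 : 2 * 4096 ^ (J + 1) ≤ (2 ^ 14) ^ (J + 1) := by
        rw [show (2 ^ 14 : ℕ) = 4 * 4096 by norm_num, mul_pow]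
        gcongr
        exact (Nat.le_self_pow (by omega) 4).trans' (by norm_num)
      omega
    calc (2 * L + 1 : ℝ) ^ d ≤ (((2 ^ 14) ^ (J + 1) : ℕ) : ℝ) ^ d := by gcongr; exact_mod_cast hnat
      _ = ((2 ^ 14 : ℝ) ^ d) ^ (J + 1) := by push_cast; ring
      _ ≤ N ^ (J + 1) := by rw [hN_def]; gcongr; nlinarith
  calc deepRatio d * ((18 * d) ^ d * deepRatio d) ^ J * (2 * L + 1) ^ d
      ≤ (N ^ 2)⁻¹ * N⁻¹ ^ J * N ^ (J + 1) := by rw [← hρ]; gcongr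
    _ = N⁻¹ := by rw [inv_pow]; field_simp; ring
    _ ≤ 1 := inv_le_one_of_one_le₀ hN

end Constants

/-- **Choosing a radius with many deep skeletal obstacles (Lemma 3.3).**
Suppose `x ∈ O` and the density of obstacles in `B(x,L)` is below `δ`. For each
radius `l` let `X l` be a skeletal set for `O ∩ B(x,l)` (containing `x`, pairwise
distances `≥ l^{1/2d}`, covering radius `l^{1/2d}`), and let `X l ∩ B(x, l/2)` be
its deep part. Then there exists `ρ > 0` independent of `L` and `δ` such that for
some `l` with `L^{5/6} ≤ l ≤ L` one has both an obstacle density `< δ` in `B(x,l)`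
and `|X°_l(x)| ≥ ρ · min(|X_l(x)|, δ l^{d-1/2})`. -/
theorem deep_skeletal_radius (d : ℕ) (hd : 2 ≤ d) :
    ∃ ρ : ℝ, 0 < ρ ∧
      ∀ (O : Set (Fin d → ℤ)) (x : Fin d → ℤ) (L : ℕ) (δ : ℝ)
        (X : ℝ → Set (Fin d → ℤ)),
        1 ≤ L → 0 < δ → x ∈ O →
        ((O ∩ latBall x (L : ℝ)).ncard : ℝ) < δ * ((latBall x (L : ℝ)).ncard : ℝ) →
        (∀ l : ℝ, 1 ≤ l →
          (X l).Finite ∧ X l ⊆ O ∩ latBall x l ∧ x ∈ X l ∧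
          (∀ a ∈ X l, ∀ b ∈ X l, a ≠ b →
            l ^ ((1 : ℝ) / (2 * (d : ℝ))) ≤ dist (toR a) (toR b)) ∧
          (∀ y ∈ O ∩ latBall x l, ∃ z ∈ X l,
            dist (toR y) (toR z) ≤ l ^ ((1 : ℝ) / (2 * (d : ℝ))))) →
        ∃ l : ℝ, (L : ℝ) ^ ((5 : ℝ) / 6) ≤ l ∧ l ≤ (L : ℝ) ∧
          ((O ∩ latBall x l).ncard : ℝ) < δ * ((latBall x l).ncard : ℝ) ∧
          ρ * min ((X l).ncard : ℝ) (δ * l ^ ((d : ℝ) - 1 / 2)) ≤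
            (((X l ∩ latBall x (l / 2)).ncard : ℝ)) := by
  have hd0 : d ≠ 0 := by omega
  have hρ := deepRatio_pos hd0
  refine ⟨deepRatio d, hρ, fun O x L δ X hL hδ _ hdens hX => ?_⟩
  have hS : ∀ l, 1 ≤ l → IsSkeletalSet O x l (X l) := fun l hl =>
    let ⟨hfin, hsub, hmem, hsep, hcov⟩ := hX l hl
    ⟨hfin, hsub, hmem, hsep, hcov⟩
  set J := Nat.log 4096 L
  have hJ : ∀ j ≤ J, 4096 ^ j ≤ L := fun j hj =>
    (Nat.pow_le_pow_right (by norm_num) hj).trans (Nat.pow_log_le_self 4096 (by omega))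
  suffices h : ∃ j ≤ J,
      ((O ∩ latBall x (L / 4 ^ j)).ncard : ℝ) < δ * (latBall x (L / 4 ^ j)).ncard ∧
      deepRatio d * min ((X (L / 4 ^ j)).ncard : ℝ) (δ * (L / 4 ^ j) ^ ((d : ℝ) - 1 / 2)) ≤
        ((X (L / 4 ^ j) ∩ latBall x (L / 4 ^ j / 2)).ncard : ℝ) by
    obtain ⟨j, hj, hdens_j, hdeep_j⟩ := h
    exact ⟨L / 4 ^ j, rpow_five_sixths_le_div_four_pow (hJ j hj),
      div_le_self (by positivity) (one_le_pow₀ (by norm_num)), hdens_j, hdeep_j⟩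
  refine exists_le_of_geometric_descent (a := fun j => ((X (L / 4 ^ j)).ncard : ℝ))
    (θ := (18 * d) ^ d * deepRatio d) (by positivity) (by simpa using hdens) ?_ ?_
  · intro j hj _ hdeep
    have hl := sixteen_le_div_four_pow (hJ (j + 1) hj)
    rw [pow_succ, ← div_div]
    exact (hS _ (by linarith)).descent_step hd0 hl hδ.le (hS _ (by linarith)) hρ.le
      (mul_deepRatio_le_one hd0) (not_le.1 hdeep)
  · intro hdecay
    refine (hS _ (one_le_div_four_pow (hJ J le_rfl))).mul_min_le_ncard_inter_latBall
      (by positivity) hρ.le ?_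
    calc deepRatio d * (X (L / 4 ^ J)).ncard
        ≤ deepRatio d * (((18 * d) ^ d * deepRatio d) ^ J * (2 * L + 1) ^ d) := by
          refine mul_le_mul_of_nonneg_left (hdecay.trans ?_) hρ.le
          gcongr
          simpa using (hS L (by exact_mod_cast hL)).ncard_le_pow (by positivity)
      _ ≤ 1 := by rw [← mul_assoc]; exact deepRatio_mul_pow_le_one hd0 L
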